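/- With the notation of the previous statement (L₀₀, L₁₁ graph Laplacians, L₁ the block matrix), the second-smallest eigenvalue of L₁ is at most n·p∅; i.e., λ_{n−1}(L₁) ≤ n·p∅. -/

import Mathlib

/-!
The vectors `𝟙` and `w = (n₁, …, n₁, -n₀, …, -n₀)` are orthogonal eigenvectors of `L₁` with
eigenvalues `0` and `n p`. If every eigenvalue except the smallest exceeded `n p`, both would be
orthogonal to all eigenvectors of an orthonormal eigenbasis but one, hence both multiples of that
one, which is impossible for two orthogonal nonzero vectors.
-/

open Matrix

namespace Matrix.IsHermitian

variable {n : Type*} [Fintype n] [DecidableEq n] {A : Matrix n n ℝ} (hA : A.IsHermitian)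
include hA

theorem eigenvectorBasis_dotProduct_eq_zero {v : n → ℝ} {μ : ℝ} (hv : A *ᵥ v = μ • v) {i : n}
    (hi : hA.eigenvalues i ≠ μ) : ⇑(hA.eigenvectorBasis i) ⬝ᵥ v = 0 := by
  have hscaled : hA.eigenvalues i * (⇑(hA.eigenvectorBasis i) ⬝ᵥ v)
      = μ * (⇑(hA.eigenvectorBasis i) ⬝ᵥ v) := by
    rw [← smul_eq_mul, ← smul_dotProduct, ← hA.mulVec_eigenvectorBasis, ← smul_eq_mul,
      ← dotProduct_smul, ← hv, dotProduct_mulVec, ← vecMul_transpose,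
      (isHermitian_iff_isSymm.mp hA).eq]
  by_contra h
  exact hi (mul_right_cancel₀ h hscaled)

theorem eq_smul_eigenvectorBasis_of_dotProduct_eq_zero {v : n → ℝ} {i : n}
    (hv : ∀ j ≠ i, ⇑(hA.eigenvectorBasis j) ⬝ᵥ v = 0) :
    v = (⇑(hA.eigenvectorBasis i) ⬝ᵥ v) • ⇑(hA.eigenvectorBasis i) := by
  have hrepr := hA.eigenvectorBasis.sum_repr (WithLp.toLp 2 v)
  simp only [OrthonormalBasis.repr_apply_apply, EuclideanSpace.inner_eq_star_dotProduct,
    star_trivial, dotProduct_comm v] at hrepr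
  rw [Finset.sum_eq_single_of_mem i (Finset.mem_univ i)
    fun j _ hj => by rw [hv j hj, zero_smul]] at hrepr
  exact congrArg WithLp.ofLp hrepr.symm

theorem dotProduct_eigenvectorBasis_self (i : n) :
    ⇑(hA.eigenvectorBasis i) ⬝ᵥ ⇑(hA.eigenvectorBasis i) = 1 := by
  have := hA.eigenvectorBasis.inner_eq_one i
  rwa [EuclideanSpace.inner_eq_star_dotProduct, star_trivial] at this

theorem exists_ne_eigenvalues_le_max {v w : n → ℝ} {μ ν : ℝ} (hv : A *ᵥ v = μ • v)
    (hw : A *ᵥ w = ν • w) (hv0 : v ≠ 0) (hw0 : w ≠ 0) (hvw : v ⬝ᵥ w = 0) (i : n) :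
    ∃ j ≠ i, hA.eigenvalues j ≤ max μ ν := by
  by_contra! hlt
  have hv' := hA.eq_smul_eigenvectorBasis_of_dotProduct_eq_zero fun j hj =>
    hA.eigenvectorBasis_dotProduct_eq_zero hv ((le_max_left μ ν).trans_lt (hlt j hj)).ne'
  have hw' := hA.eq_smul_eigenvectorBasis_of_dotProduct_eq_zero fun j hj =>
    hA.eigenvectorBasis_dotProduct_eq_zero hw ((le_max_right μ ν).trans_lt (hlt j hj)).ne'
  rw [hv', hw', smul_dotProduct, dotProduct_smul, hA.dotProduct_eigenvectorBasis_self,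
    smul_eq_mul, smul_eq_mul, mul_one, mul_eq_zero] at hvw
  rcases hvw with hc | hc
  · exact hv0 (by rw [hv', hc, zero_smul])
  · exact hw0 (by rw [hw', hc, zero_smul])

end Matrix.IsHermitian

theorem Monotone.apply_one_le_of_ne_apply_zero {ι α : Type*} [Preorder α] {m : ℕ}
    (h1 : 1 < m) {f : ι → α} {σ : Fin m ≃ ι} (hσ : Monotone (f ∘ σ)) {j : ι} (hj : j ≠ σ ⟨0, by omega⟩) :
    f (σ ⟨1, h1⟩) ≤ f j := by
  have h0 : (σ.symm j : ℕ) ≠ 0 := fun h => hj (σ.symm_apply_eq.mp (Fin.ext h))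
  simpa using hσ (show (⟨1, h1⟩ : Fin m) ≤ σ.symm j from Fin.mk_le_of_le_val (by omega))

section BlockMulVec

variable {R m n : Type*} [Fintype n]

theorem of_const_mulVec_const [Semiring R] (p b : R) :
    (of fun (_ : m) (_ : n) => p) *ᵥ (fun _ => b) = fun _ => Fintype.card n * p * b := by
  ext
  simp [mulVec, dotProduct, mul_assoc]

theorem mulVec_const_eq_zero [CommSemiring R] {A : Matrix m n R} (hA : A *ᵥ (fun _ => 1) = 0)
    (a : R) : A *ᵥ (fun _ => a) = 0 := by
  rw [show (fun _ : n => a) = a • fun _ => 1 by ext; simp, mulVec_smul, hA, smul_zero]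

theorem fromBlocks_mulVec_sumElim_const [CommRing R] [Fintype m] [DecidableEq m] [DecidableEq n]
    {A : Matrix m m R} {D : Matrix n n R} (hA : A *ᵥ (fun _ => 1) = 0) (hD : D *ᵥ (fun _ => 1) = 0) (p a b : R) :
    fromBlocks (A + (Fintype.card n * p) • 1) (-of fun _ _ => p) (-of fun _ _ => p)
        (D + (Fintype.card m * p) • 1) *ᵥ Sum.elim (fun _ => a) (fun _ => b) =
      Sum.elim (fun _ => Fintype.card n * p * (a - b)) (fun _ => Fintype.card m * p * (b - a)) := by
  simp only [fromBlocks_mulVec, add_mulVec, smul_mulVec, one_mulVec, neg_mulVec,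
    mulVec_const_eq_zero hA, mulVec_const_eq_zero hD, of_const_mulVec_const,
    Sum.elim_comp_inl, Sum.elim_comp_inr]
  congr 1 <;> ext <;> simp <;> ring

end BlockMulVec

/-- With `L₀₀`, `L₁₁` graph Laplacians and `L₁` the block matrix
`[[L₀₀ + n₁p∅·I, −p∅·J], [−p∅·J, L₁₁ + n₀p∅·I]]`, the second-smallest eigenvalue
of `L₁` is at most `n·p∅`. Eigenvalues are listed in nondecreasing order via a
sorting bijection `σ`. -/
theorem block_laplacian_second_eigenvalue_le (n₀ n₁ : ℕ) (hn₀ : 0 < n₀) (hn₁ : 0 < n₁)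
    (p : ℝ) (hp : 0 ≤ p)
    (L₀₀ : Matrix (Fin n₀) (Fin n₀) ℝ) (L₁₁ : Matrix (Fin n₁) (Fin n₁) ℝ)
    (h₀₀one : L₀₀.mulVec (fun _ => (1 : ℝ)) = 0)
    (h₁₁one : L₁₁.mulVec (fun _ => (1 : ℝ)) = 0)
    (L₁ : Matrix (Fin n₀ ⊕ Fin n₁) (Fin n₀ ⊕ Fin n₁) ℝ)
    (hL₁ : L₁ = Matrix.fromBlocks
      (L₀₀ + ((n₁ : ℝ) * p) • (1 : Matrix (Fin n₀) (Fin n₀) ℝ))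
      (-(Matrix.of fun _ _ => p))
      (-(Matrix.of fun _ _ => p))
      (L₁₁ + ((n₀ : ℝ) * p) • (1 : Matrix (Fin n₁) (Fin n₁) ℝ)))
    (hherm : L₁.IsHermitian)
    (σ : Fin (n₀ + n₁) ≃ (Fin n₀ ⊕ Fin n₁))
    (hσ : Monotone (hherm.eigenvalues ∘ σ)) :
    hherm.eigenvalues (σ ⟨1, by omega⟩) ≤ ((n₀ + n₁ : ℕ) : ℝ) * p := by
  have hL₁_const (a b : ℝ) : L₁ *ᵥ Sum.elim (fun _ => a) (fun _ => b) =
      Sum.elim (fun _ => n₁ * p * (a - b)) (fun _ => n₀ * p * (b - a)) := by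
    rw [hL₁]
    simpa only [Fintype.card_fin] using fromBlocks_mulVec_sumElim_const h₀₀one h₁₁one p a b
  set one : Fin n₀ ⊕ Fin n₁ → ℝ := Sum.elim (fun _ => 1) (fun _ => 1)
  set w : Fin n₀ ⊕ Fin n₁ → ℝ := Sum.elim (fun _ => n₁) (fun _ => -n₀)
  have h_one : L₁ *ᵥ one = (0 : ℝ) • one := by
    rw [hL₁_const]; ext (_ | _) <;> simp
  have h_w : L₁ *ᵥ w = (((n₀ + n₁ : ℕ) : ℝ) * p) • w := by
    rw [hL₁_const]; ext (_ | _) <;> simp [w] <;> ring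
  have h_one_ne : one ≠ 0 := fun h => by simpa [one] using congrFun h (Sum.inl ⟨0, hn₀⟩)
  have h_w_ne : w ≠ 0 := fun h => by
    simpa [w, hn₁.ne'] using congrFun h (Sum.inl ⟨0, hn₀⟩)
  have h_orth : one ⬝ᵥ w = 0 := by
    simp [one, w, dotProduct, Fintype.sum_sum_type, mul_comm]
  obtain ⟨j, hj, hj_le⟩ :=
    hherm.exists_ne_eigenvalues_le_max h_one h_w h_one_ne h_w_ne h_orth (σ ⟨0, by omega⟩)
  calc hherm.eigenvalues (σ ⟨1, _⟩)
      ≤ hherm.eigenvalues j := hσ.apply_one_le_of_ne_apply_zero _ hj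
    _ ≤ _ := hj_le.trans (max_le (by positivity) le_rfl)
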